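/- Let x₀, v_max, a > 0 and t₀ < t_f1 ≤ t_f, with Δ := t_f − t₀ and S := t_f − t_f1. Assume Δ ≥ x₀/v_max + v_max/a and S ≤ x₀/v_max − v_max/a. Define t_stop := t₀ + x₀/v_max − S, t_dec := t_stop − v_max/a, t_acc := t_f1 − v_max/a, and the piecewise trajectory x* on [t₀, t_f] by: x*(s) = −x₀ + v_max(s − t₀) for s ∈ [t₀, t_dec]; x*(s) = −x₀ + v_max(s − t₀) − (a/2)(s − t_dec)² for s ∈ [t_dec, t_stop]; x*(s) = −v_max·S − v_max²/(2a) for s ∈ [t_stop, t_acc]; x*(s) = −v_max·S − v_max²/(2a) + (a/2)(s − t_acc)² for s ∈ [t_acc, t_f1]; x*(s) = −v_max·S + v_max(s − t_f1) for s ∈ [t_f1, t_f]. Then every x ∈ Π(t₀, t_f, x₀, v_max, a) satisfying x(t_f1) ≤ −v_max·S also satisfies x(s) ≤ x*(s) for all s ∈ [t₀, t_f]. -/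

import Mathlib

/-- The class `Π(t₀, t_f, x₀, v_max, a)` of compatible trajectories: continuously
differentiable on `[t₀, t_f]`, derivative Lipschitz with constant `a` (acceleration
bounded by `a`), speed in `[0, v_max]`, entering the control region of length `x₀` at
speed `v_max` and reaching the intersection (position `0`) at speed `v_max`. -/
def CompatTraj (t₀ tf x₀ vmax a : ℝ) : Set (ℝ → ℝ) :=
  {x | ContDiffOn ℝ 1 x (Set.Icc t₀ tf) ∧
    LipschitzOnWith (Real.toNNReal a) (deriv x) (Set.Icc t₀ tf) ∧
    (∀ s ∈ Set.Icc t₀ tf, 0 ≤ deriv x s ∧ deriv x s ≤ vmax) ∧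
    x t₀ = -x₀ ∧ deriv x t₀ = vmax ∧ x tf = 0 ∧ deriv x tf = vmax}

/-- The closed-form trajectory with a full stop: drive at `v_max`, decelerate at `−a`
to rest, rest, accelerate at `a` back to `v_max` at the platoon head's crossing time
`t_f1`, then drive at `v_max`. -/
noncomputable def xStarStop (x₀ vmax a t₀ tf1 tf : ℝ) (s : ℝ) : ℝ :=
  let S := tf - tf1
  let tstop := t₀ + x₀ / vmax - S
  let tdec := tstop - vmax / a
  let tacc := tf1 - vmax / a
  if s ≤ tdec then -x₀ + vmax * (s - t₀)
  else if s ≤ tstop then -x₀ + vmax * (s - t₀) - a / 2 * (s - tdec) ^ 2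
  else if s ≤ tacc then -vmax * S - vmax ^ 2 / (2 * a)
  else if s ≤ tf1 then -vmax * S - vmax ^ 2 / (2 * a) + a / 2 * (s - tacc) ^ 2
  else -vmax * S + vmax * (s - tf1)

/-!
The speed bounds `0 ≤ ẋ ≤ v_max` make `x` nondecreasing and never ahead of the entry line; with
`x(t_f) = 0` and the safety constraint they pin `x` to the exit line on `[t_f1, t_f]`, so that
`ẋ(t_f1) = v_max`. Since `ẋ` is `a`-Lipschitz, `x - a u²/2` is concave and `x + a u²/2` is
convex. Concavity keeps `x` below its tangent parabola at `t_f1`: this is the acceleration arc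
of `x*` and, by monotonicity, its rest level. Convexity keeps `x` below the braking arc, a
parabola of curvature `-a` which dominates `x` at both of its endpoints (by the entry line and
the rest level).
-/

open Set NNReal

theorem LipschitzOnWith.monotoneOn_add_mul {K : ℝ≥0} {g : ℝ → ℝ} {s : Set ℝ}
    (hg : LipschitzOnWith K g s) : MonotoneOn (fun u => g u + K * u) s := by
  intro u hu v hv huv
  have h := (le_abs_self _).trans (hg.dist_le_mul u hu v hv)
  rw [Real.dist_eq, abs_of_nonpos (sub_nonpos.2 huv)] at h
  dsimp only
  linarith

theorem LipschitzOnWith.antitoneOn_sub_mul {K : ℝ≥0} {g : ℝ → ℝ} {s : Set ℝ}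
    (hg : LipschitzOnWith K g s) : AntitoneOn (fun u => g u - K * u) s := by
  intro u hu v hv huv
  have h := (le_abs_self _).trans (hg.dist_le_mul v hv u hu)
  rw [Real.dist_eq, abs_of_nonneg (sub_nonneg.2 huv)] at h
  dsimp only
  linarith

theorem HasDerivAt.add_half_mul_sq {f : ℝ → ℝ} {f' u : ℝ} (hf : HasDerivAt f f' u) (c : ℝ) :
    HasDerivAt (fun v => f v + c / 2 * v ^ 2) (f' + c * u) u :=
  (hf.add ((hasDerivAt_pow 2 u).const_mul (c / 2))).congr_deriv (by ring)

theorem HasDerivAt.sub_half_mul_sq {f : ℝ → ℝ} {f' u : ℝ} (hf : HasDerivAt f f' u) (c : ℝ) :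
    HasDerivAt (fun v => f v - c / 2 * v ^ 2) (f' - c * u) u :=
  (hf.sub ((hasDerivAt_pow 2 u).const_mul (c / 2))).congr_deriv (by ring)

theorem convexOn_add_half_mul_sq_of_lipschitzOnWith_deriv {K : ℝ≥0} {f : ℝ → ℝ} {D : Set ℝ}
    (hD : Convex ℝ D) (hf : ContinuousOn f D) (hf' : DifferentiableOn ℝ f (interior D))
    (hL : LipschitzOnWith K (deriv f) D) : ConvexOn ℝ D fun u => f u + K / 2 * u ^ 2 := by
  have hderiv (u) (hu : u ∈ interior D) :
      HasDerivAt (fun v => f v + K / 2 * v ^ 2) (deriv f u + K * u) u :=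
    ((hf' u hu).differentiableAt (isOpen_interior.mem_nhds hu)).hasDerivAt.add_half_mul_sq _
  refine MonotoneOn.convexOn_of_deriv hD (hf.add (by fun_prop))
    (fun u hu => (hderiv u hu).differentiableAt.differentiableWithinAt) ?_
  exact (hL.monotoneOn_add_mul.mono interior_subset).congr fun u hu => (hderiv u hu).deriv.symm

theorem concaveOn_sub_half_mul_sq_of_lipschitzOnWith_deriv {K : ℝ≥0} {f : ℝ → ℝ} {D : Set ℝ}
    (hD : Convex ℝ D) (hf : ContinuousOn f D) (hf' : DifferentiableOn ℝ f (interior D))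
    (hL : LipschitzOnWith K (deriv f) D) : ConcaveOn ℝ D fun u => f u - K / 2 * u ^ 2 := by
  have hderiv (u) (hu : u ∈ interior D) :
      HasDerivAt (fun v => f v - K / 2 * v ^ 2) (deriv f u - K * u) u :=
    ((hf' u hu).differentiableAt (isOpen_interior.mem_nhds hu)).hasDerivAt.sub_half_mul_sq _
  refine AntitoneOn.concaveOn_of_deriv hD (hf.sub (by fun_prop))
    (fun u hu => (hderiv u hu).differentiableAt.differentiableWithinAt) ?_
  exact (hL.antitoneOn_sub_mul.mono interior_subset).congr fun u hu => (hderiv u hu).deriv.symm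

theorem DifferentiableAt.deriv_eq_of_eqOn_Icc {f : ℝ → ℝ} {p q m c : ℝ}
    (hf : DifferentiableAt ℝ f p) (hpq : p < q) (h : EqOn f (fun u => m * (u - c)) (Icc p q)) :
    deriv f p = m := by
  have hline : HasDerivWithinAt f m (Icc p q) p := by
    refine HasDerivWithinAt.congr_of_mem ?_ h (left_mem_Icc.2 hpq.le)
    simpa using ((hasDerivAt_id p).sub_const c).const_mul m |>.hasDerivWithinAt
  exact (uniqueDiffOn_Icc hpq p (left_mem_Icc.2 hpq.le)).eq_deriv _
    hf.hasDerivAt.hasDerivWithinAt hline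

theorem le_parabola_of_convexOn_add_half_mul_sq {f : ℝ → ℝ} {K c m r₁ r₂ p q u : ℝ}
    (hf : ConvexOn ℝ (Icc p q) fun u => f u + K / 2 * u ^ 2) (hu : u ∈ Icc p q)
    (hp : f p ≤ c + m * (p - r₁) - K / 2 * (p - r₂) ^ 2)
    (hq : f q ≤ c + m * (q - r₁) - K / 2 * (q - r₂) ^ 2) :
    f u ≤ c + m * (u - r₁) - K / 2 * (u - r₂) ^ 2 := by
  obtain rfl | hpq := (hu.1.trans hu.2).eq_or_lt
  · rwa [le_antisymm hu.2 hu.1]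
  have hqp : 0 < q - p := sub_pos.2 hpq
  set α := (q - u) / (q - p)
  set β := (u - p) / (q - p)
  have hα : 0 ≤ α := div_nonneg (sub_nonneg.2 hu.2) hqp.le
  have hβ : 0 ≤ β := div_nonneg (sub_nonneg.2 hu.1) hqp.le
  have hαβ : α + β = 1 := by simp only [α, β]; field_simp; ring
  have hu' : α * p + β * q = u := by simp only [α, β]; field_simp; ring
  have hchord := hf.2 (left_mem_Icc.2 hpq.le) (right_mem_Icc.2 hpq.le) hα hβ hαβ
  simp only [smul_eq_mul, hu'] at hchord
  clear_value α β
  subst hu'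
  obtain rfl : β = 1 - α := by linarith
  nlinarith [mul_le_mul_of_nonneg_left hp hα, mul_le_mul_of_nonneg_left hq hβ]

namespace CompatTraj

variable {t₀ tf x₀ vmax a t s : ℝ} {x : ℝ → ℝ}

theorem continuousOn (hx : x ∈ CompatTraj t₀ tf x₀ vmax a) : ContinuousOn x (Icc t₀ tf) :=
  hx.1.continuousOn

theorem differentiableOn (hx : x ∈ CompatTraj t₀ tf x₀ vmax a) :
    DifferentiableOn ℝ x (interior (Icc t₀ tf)) :=
  (hx.1.differentiableOn one_ne_zero).mono interior_subset

theorem monotoneOn (hx : x ∈ CompatTraj t₀ tf x₀ vmax a) : MonotoneOn x (Icc t₀ tf) :=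
  monotoneOn_of_deriv_nonneg (convex_Icc _ _) (continuousOn hx) (differentiableOn hx)
    fun u hu => (hx.2.2.1 u (interior_subset hu)).1

theorem sub_le_mul_sub (hx : x ∈ CompatTraj t₀ tf x₀ vmax a) {p q : ℝ} (hp : p ∈ Icc t₀ tf)
    (hq : q ∈ Icc t₀ tf) (hpq : p ≤ q) : x q - x p ≤ vmax * (q - p) :=
  (convex_Icc _ _).image_sub_le_mul_sub_of_deriv_le (continuousOn hx) (differentiableOn hx)
    (fun u hu => (hx.2.2.1 u (interior_subset hu)).2) p hp q hq hpq

theorem le_entry_line (hx : x ∈ CompatTraj t₀ tf x₀ vmax a) (hs : s ∈ Icc t₀ tf) :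
    x s ≤ -x₀ + vmax * (s - t₀) := by
  have := sub_le_mul_sub hx (left_mem_Icc.2 (hs.1.trans hs.2)) hs hs.1
  obtain ⟨-, -, -, hentry, -⟩ := hx
  linarith

theorem eqOn_exit_line_of_le (hx : x ∈ CompatTraj t₀ tf x₀ vmax a) (ht : t ∈ Icc t₀ tf)
    (hsafe : x t ≤ -vmax * (tf - t)) : EqOn x (fun u => vmax * (u - tf)) (Icc t tf) := by
  intro u hu
  have hu' : u ∈ Icc t₀ tf := ⟨ht.1.trans hu.1, hu.2⟩
  have hleft := sub_le_mul_sub hx ht hu' hu.1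
  have hright := sub_le_mul_sub hx hu' (right_mem_Icc.2 (ht.1.trans ht.2)) hu.2
  obtain ⟨-, -, -, -, -, hexit, -⟩ := hx
  dsimp only
  linarith

theorem deriv_eq_vmax_of_le (hx : x ∈ CompatTraj t₀ tf x₀ vmax a) (ht : t ∈ Ioc t₀ tf)
    (hsafe : x t ≤ -vmax * (tf - t)) : deriv x t = vmax := by
  obtain rfl | htf := ht.2.eq_or_lt
  · exact hx.2.2.2.2.2.2
  have hdiff : DifferentiableAt ℝ x t :=
    differentiableOn hx |>.differentiableAt (interior_mem_nhds.2 (Icc_mem_nhds ht.1 htf))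
  exact hdiff.deriv_eq_of_eqOn_Icc htf (eqOn_exit_line_of_le hx (Ioc_subset_Icc_self ht) hsafe)

theorem convexOn_add_half_mul_sq (hx : x ∈ CompatTraj t₀ tf x₀ vmax a) (ha : 0 ≤ a) :
    ConvexOn ℝ (Icc t₀ tf) fun u => x u + a / 2 * u ^ 2 := by
  simpa [Real.coe_toNNReal a ha] using convexOn_add_half_mul_sq_of_lipschitzOnWith_deriv
    (convex_Icc _ _) (continuousOn hx) (differentiableOn hx) hx.2.1

theorem concaveOn_sub_half_mul_sq (hx : x ∈ CompatTraj t₀ tf x₀ vmax a) (ha : 0 ≤ a) :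
    ConcaveOn ℝ (Icc t₀ tf) fun u => x u - a / 2 * u ^ 2 := by
  simpa [Real.coe_toNNReal a ha] using concaveOn_sub_half_mul_sq_of_lipschitzOnWith_deriv
    (convex_Icc _ _) (continuousOn hx) (differentiableOn hx) hx.2.1

theorem le_exit_parabola_of_le (hx : x ∈ CompatTraj t₀ tf x₀ vmax a) (hv : 0 < vmax) (ha : 0 ≤ a)
    (ht : t ∈ Ioc t₀ tf) (hsafe : x t ≤ -vmax * (tf - t)) (hs : s ∈ Icc t₀ t) :
    x s ≤ vmax * (s - tf) + a / 2 * (t - s) ^ 2 := by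
  obtain rfl | hst := hs.2.eq_or_lt
  · have := eqOn_exit_line_of_le hx (Ioc_subset_Icc_self ht) hsafe (left_mem_Icc.2 ht.2)
    simp only at this
    linarith
  have hderiv := deriv_eq_vmax_of_le hx ht hsafe
  have hdiff : HasDerivAt x vmax t := by
    rw [← hderiv]
    exact (differentiableAt_of_deriv_ne_zero (hderiv ▸ hv.ne')).hasDerivAt
  have htangent := (concaveOn_sub_half_mul_sq hx ha).le_slope_of_hasDerivAt
    ⟨hs.1, hst.le.trans ht.2⟩ (Ioc_subset_Icc_self ht) hst (hdiff.sub_half_mul_sq a)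
  have hxt := eqOn_exit_line_of_le hx (Ioc_subset_Icc_self ht) hsafe (right_mem_Icc.2 ht.2)
  rw [slope_def_field, le_div_iff₀ (sub_pos.2 hst)] at htangent
  simp only at hxt htangent
  nlinarith

theorem le_rest_level_of_le (hx : x ∈ CompatTraj t₀ tf x₀ vmax a) (hv : 0 < vmax) (ha : 0 < a)
    (ht : t ∈ Ioc t₀ tf) (hsafe : x t ≤ -vmax * (tf - t)) (hs : s ∈ Icc t₀ (t - vmax / a)) :
    x s ≤ -vmax * (tf - t) - vmax ^ 2 / (2 * a) := by
  have htacc : t - vmax / a ∈ Icc t₀ t := ⟨hs.1.trans hs.2, by linarith [div_pos hv ha]⟩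
  calc x s ≤ x (t - vmax / a) :=
        monotoneOn hx ⟨hs.1, hs.2.trans (htacc.2.trans ht.2)⟩
          ⟨htacc.1, htacc.2.trans ht.2⟩ hs.2
    _ ≤ vmax * (t - vmax / a - tf) + a / 2 * (t - (t - vmax / a)) ^ 2 :=
        le_exit_parabola_of_le hx hv ha.le ht hsafe htacc
    _ = -vmax * (tf - t) - vmax ^ 2 / (2 * a) := by field_simp; ring

end CompatTraj

theorem xStarStop_pointwise_optimal
    (x₀ vmax a t₀ tf1 tf : ℝ)
    (hv : 0 < vmax) (ha : 0 < a)
    (ht₀ : t₀ < tf1) (htf : tf1 ≤ tf)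
    (hΔ : tf - t₀ ≥ x₀ / vmax + vmax / a)
    (hS : tf - tf1 ≤ x₀ / vmax - vmax / a) :
    ∀ x ∈ CompatTraj t₀ tf x₀ vmax a,
      x tf1 ≤ -vmax * (tf - tf1) →
      ∀ s ∈ Set.Icc t₀ tf, x s ≤ xStarStop x₀ vmax a t₀ tf1 tf s := by
  intro x hx hsafe s hs
  have ht₁ : tf1 ∈ Ioc t₀ tf := ⟨ht₀, htf⟩
  simp only [xStarStop]
  set tstop := t₀ + x₀ / vmax - (tf - tf1)
  set tdec := tstop - vmax / a
  split_ifs with h₁ h₂ h₃ h₄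
  · exact CompatTraj.le_entry_line hx hs
  · have hconv : ConvexOn ℝ (Icc tdec tstop) fun u => x u + a / 2 * u ^ 2 :=
      (CompatTraj.convexOn_add_half_mul_sq hx ha.le).subset
        (Icc_subset_Icc (by linarith) (by linarith)) (convex_Icc _ _)
    refine le_parabola_of_convexOn_add_half_mul_sq hconv ⟨(not_le.1 h₁).le, h₂⟩
      (by simpa using CompatTraj.le_entry_line hx ⟨by linarith, by linarith⟩) ?_
    calc x tstop ≤ -vmax * (tf - tf1) - vmax ^ 2 / (2 * a) :=
          CompatTraj.le_rest_level_of_le hx hv ha ht₁ hsafe ⟨by linarith, by linarith⟩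
      _ = -x₀ + vmax * (tstop - t₀) - a / 2 * (tstop - tdec) ^ 2 := by
          simp only [tdec, tstop]; field_simp; ring
  · exact CompatTraj.le_rest_level_of_le hx hv ha ht₁ hsafe ⟨hs.1, h₃⟩
  · calc x s ≤ vmax * (s - tf) + a / 2 * (tf1 - s) ^ 2 :=
          CompatTraj.le_exit_parabola_of_le hx hv ha.le ht₁ hsafe ⟨hs.1, h₄⟩
      _ = _ := by field_simp; ring
  · have hexit := CompatTraj.eqOn_exit_line_of_le hx (Ioc_subset_Icc_self ht₁) hsafe
      ⟨(not_le.1 h₄).le, hs.2⟩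
    simp only at hexit
    linarith
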